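/- arXiv:2209.02670 — 9 statements merged into one kernel-verified Lean document; each statement's English description precedes it below -/
import Mathlib

section
/- Let G be a finite simple graph and α : E(G) → {0,1} an edge labelling. Define v ∼_α w iff there is a walk from v to w in G all of whose edges e satisfy α(e) = 1 (in particular v ∼_α v); this is an equivalence relation. Then α is realizable (i.e., α is the equality labelling of some vertex labelling) if and only if for every edge {v,w} ∈ E(G), v ∼_α w implies α({v,w}) = 1. -/
/-!
A vertex labelling is constant along walks of `1`-edges, so a realizable labelling gives `1` to
every edge inside a class of `∼_α`. Conversely, labelling each vertex by its `∼_α`-class gives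
equal labels exactly across the edges inside a class, and these are the `1`-edges under the
hypothesis.
-/

open SimpleGraph

variable {V : Type*}

/-- The element of `G.edgeSet` corresponding to an adjacent pair of vertices. -/
def edgeMk (G : SimpleGraph V) {v w : V} (h : G.Adj v w) : G.edgeSet :=
  ⟨s(v, w), (SimpleGraph.mem_edgeSet G).mpr h⟩

/-- `α` is the equality labelling of the vertex labelling `lam` (label 1 ↔ `True`). -/
def IsEqualityLabelling (G : SimpleGraph V) {Λ : Type*} (lam : V → Λ)
    (α : G.edgeSet → Prop) : Prop :=
  ∀ v w (h : G.Adj v w), (α (edgeMk G h) ↔ lam v = lam w)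

/-- An edge `{0,1}`-labelling is realizable (classical) if it is the equality labelling
of some vertex labelling into some set `Λ`. -/
def Realizable (G : SimpleGraph V) (α : G.edgeSet → Prop) : Prop :=
  ∃ (Λ : Type) (lam : V → Λ), IsEqualityLabelling G lam α

/-- One step along an edge labelled `1` by `α`. -/
def stepRel (G : SimpleGraph V) (α : G.edgeSet → Prop) (v w : V) : Prop :=
  ∃ h : G.Adj v w, α (edgeMk G h)

theorem edgeMk_symm (G : SimpleGraph V) {v w : V} (h : G.Adj v w) :
    edgeMk G h.symm = edgeMk G h :=
  Subtype.ext Sym2.eq_swap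

instance (G : SimpleGraph V) (α : G.edgeSet → Prop) : Std.Symm (stepRel G α) where
  symm _ _ := fun ⟨h, ha⟩ ↦ ⟨h.symm, (edgeMk_symm G h).symm ▸ ha⟩

theorem equivalence_reflTransGen_stepRel (G : SimpleGraph V) (α : G.edgeSet → Prop) :
    Equivalence (Relation.ReflTransGen (stepRel G α)) :=
  ⟨fun _ ↦ .refl, fun h ↦ Std.Symm.symm _ _ h, .trans⟩

/-- The relation `∼_α` as a setoid. -/
def labelSetoid (G : SimpleGraph V) (α : G.edgeSet → Prop) : Setoid V :=
  ⟨_, equivalence_reflTransGen_stepRel G α⟩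

theorem IsEqualityLabelling.eq_of_reflTransGen {G : SimpleGraph V} {Λ : Type*} {lam : V → Λ}
    {α : G.edgeSet → Prop} (hlam : IsEqualityLabelling G lam α) {v w : V}
    (hvw : Relation.ReflTransGen (stepRel G α) v w) : lam v = lam w :=
  Relation.reflTransGen_le_of_equivalence_of_le (eq_equivalence.comap lam)
    (fun _ _ ⟨h, ha⟩ ↦ (hlam _ _ h).mp ha) _ _ hvw

theorem IsEqualityLabelling.comp_injective {G : SimpleGraph V} {Λ Λ' : Type*} {lam : V → Λ}
    {α : G.edgeSet → Prop} (hlam : IsEqualityLabelling G lam α) {f : Λ → Λ'}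
    (hf : f.Injective) : IsEqualityLabelling G (f ∘ lam) α :=
  fun v w h ↦ (hlam v w h).trans hf.eq_iff.symm

theorem isEqualityLabelling_labelSetoid_mk (G : SimpleGraph V) (α : G.edgeSet → Prop)
    (hα : ∀ v w (h : G.Adj v w), Relation.ReflTransGen (stepRel G α) v w → α (edgeMk G h)) :
    IsEqualityLabelling G (Quotient.mk (labelSetoid G α)) α :=
  fun v w h ↦ ⟨fun ha ↦ Quotient.sound (.single ⟨h, ha⟩), fun hvw ↦ hα v w h (Quotient.exact hvw)⟩

/-- `v ∼_α w` iff there is a walk from `v` to `w` all of whose edges are labelled `1`: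
this is an equivalence relation, and `α` is realizable iff for every edge `{v,w}`,
`v ∼_α w` implies `α({v,w}) = 1`. -/
theorem stmt0 [Fintype V] (G : SimpleGraph V) (α : G.edgeSet → Prop) :
    Equivalence (Relation.ReflTransGen (stepRel G α)) ∧
    (Realizable G α ↔
      ∀ v w (h : G.Adj v w),
        Relation.ReflTransGen (stepRel G α) v w → α (edgeMk G h)) := by
  refine ⟨equivalence_reflTransGen_stepRel G α, ?_, fun hα ↦ ?_⟩
  · rintro ⟨Λ, lam, hlam⟩ v w h hvw
    exact (hlam v w h).mpr (hlam.eq_of_reflTransGen hvw)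
  · -- `Realizable` asks for labels in `Type`, so the classes are numbered.
    exact ⟨_, _, (isEqualityLabelling_labelSetoid_mk G α hα).comp_injective
      (Finite.equivFin (Quotient (labelSetoid G α))).injective⟩
end

section
/- Let G be a finite simple graph, α : E(G) → {0,1} an edge labelling, and Λ any set. Let ∼_α be the equivalence relation on V(G) where v ∼_α w iff there is a walk from v to w all of whose edges have α-label 1, and let Q = V(G)/∼_α be the quotient set. Define a relation R on Q by: [v] R [w] iff there exist v' ∈ [v] and w' ∈ [w] with {v',w'} ∈ E(G) and α({v',w'}) = 0. Then the vertex labellings λ : V(G) → Λ with ε_λ = α are in bijective correspondence with the functions κ : Q → Λ such that A R B implies κ(A) ≠ κ(B). -/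
/-!
A labelling with equality labelling `α` is constant along edges labelled 1, hence on the
classes of `∼_α`, so it factors through `Q`; the factor separates `R`-related classes because
edges labelled 0 join differently labelled vertices. Conversely, for such a `κ` the labelling
`κ ∘ [·]` has equality labelling `α`: an edge labelled 1 lies inside a class, and an edge
labelled 0 joins `R`-related classes.
-/

open SimpleGraph

variable {V : Type*}

/-- `v ∼_α w`: there is a walk from `v` to `w` all of whose edges are labelled 1. -/
def simRel (G : SimpleGraph V) (α : G.edgeSet → Prop) : V → V → Prop :=
  Relation.ReflTransGen (stepRel G α)

/-- The relation `R` on the quotient `Q = V/∼_α`: `[v] R [w]` iff there are representatives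
`v' ∈ [v]`, `w' ∈ [w]` with `{v',w'} ∈ E(G)` and `α({v',w'}) = 0`. -/
def quotRel (G : SimpleGraph V) (α : G.edgeSet → Prop) :
    Quot (simRel G α) → Quot (simRel G α) → Prop := fun A B =>
  ∃ v w : V, Quot.mk (simRel G α) v = A ∧ Quot.mk (simRel G α) w = B ∧
    ∃ h : G.Adj v w, ¬ α (edgeMk G h)

section

variable {G : SimpleGraph V} {α : G.edgeSet → Prop} {Λ : Type*}

namespace IsEqualityLabelling

variable {lam : V → Λ}

theorem eq_of_simRel (hlam : IsEqualityLabelling G lam α) {v w : V} (h : simRel G α v w) :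
    lam v = lam w := by
  induction h with
  | refl => rfl
  | tail _ hstep ih =>
    obtain ⟨hadj, hα⟩ := hstep
    exact ih.trans ((hlam _ _ hadj).mp hα)

def lift (hlam : IsEqualityLabelling G lam α) : Quot (simRel G α) → Λ :=
  Quot.lift lam fun _ _ => hlam.eq_of_simRel

theorem lift_ne_of_quotRel (hlam : IsEqualityLabelling G lam α) {A B : Quot (simRel G α)}
    (hAB : quotRel G α A B) : hlam.lift A ≠ hlam.lift B := by
  obtain ⟨v, w, rfl, rfl, hadj, hα⟩ := hAB
  exact fun h => hα ((hlam v w hadj).mpr h)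

end IsEqualityLabelling

theorem isEqualityLabelling_comp_mk {κ : Quot (simRel G α) → Λ}
    (hκ : ∀ A B, quotRel G α A B → κ A ≠ κ B) :
    IsEqualityLabelling G (κ ∘ Quot.mk (simRel G α)) α := by
  intro v w hadj
  refine ⟨fun hα => congrArg κ (Quot.sound (.single ⟨hadj, hα⟩)), fun hvw => ?_⟩
  by_contra hα
  exact hκ _ _ ⟨v, w, rfl, rfl, hadj, hα⟩ hvw

end

def equalityLabellingEquiv (G : SimpleGraph V) (α : G.edgeSet → Prop) (Λ : Type*) :
    {lam : V → Λ // IsEqualityLabelling G lam α} ≃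
      {κ : Quot (simRel G α) → Λ // ∀ A B, quotRel G α A B → κ A ≠ κ B} where
  toFun lam := ⟨lam.2.lift, fun _ _ => lam.2.lift_ne_of_quotRel⟩
  invFun κ := ⟨κ.1 ∘ Quot.mk _, isEqualityLabelling_comp_mk κ.2⟩
  left_inv _ := rfl
  right_inv _ := Subtype.ext (funext (Quot.ind fun _ => rfl))

theorem stmt1_general (G : SimpleGraph V) (α : G.edgeSet → Prop) (Λ : Type*) :
    ∃ e : {lam : V → Λ // IsEqualityLabelling G lam α} ≃
        {κ : Quot (simRel G α) → Λ // ∀ A B, quotRel G α A B → κ A ≠ κ B},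
      ∀ (lam : {lam : V → Λ // IsEqualityLabelling G lam α}) (v : V),
        (e lam).1 (Quot.mk (simRel G α) v) = lam.1 v :=
  ⟨equalityLabellingEquiv G α Λ, fun _ _ => rfl⟩

/-- The vertex labellings `lam : V → Λ` with `ε_lam = α` are in bijective correspondence
(via `lam = κ ∘ [·]`) with the functions `κ : Q → Λ` such that `A R B → κ A ≠ κ B`. -/
theorem stmt1 [Fintype V] (G : SimpleGraph V) (α : G.edgeSet → Prop) (Λ : Type*) :
    ∃ e : {lam : V → Λ // IsEqualityLabelling G lam α} ≃
        {κ : Quot (simRel G α) → Λ // ∀ A B, quotRel G α A B → κ A ≠ κ B},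
      ∀ (lam : {lam : V → Λ // IsEqualityLabelling G lam α}) (v : V),
        (e lam).1 (Quot.mk (simRel G α) v) = lam.1 v :=
  stmt1_general G α Λ
end

section
/- Let G be a finite simple graph and V₁, V₂ ⊆ V(G) with V₁ ∪ V₂ = V(G) and V₁ ∩ V₂ = {v} a single vertex, such that every edge of G has both endpoints in V₁ or both in V₂ (i.e., G is the gluing of the induced subgraphs G₁ on V₁ and G₂ on V₂ along the vertex v). Then an edge weighting r ∈ [0,1]^{E(G)} lies in the classical polytope C_G if and only if its restriction to E(G₁) lies in C_{G₁} and its restriction to E(G₂) lies in C_{G₂}; that is, C_G = C_{G₁} × C_{G₂} under the identification E(G) = E(G₁) ⊔ E(G₂). -/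
open SimpleGraph
open scoped Classical

variable {V : Type*}

/-- `r` is a realizable edge `{0,1}`-labelling of `G`, viewed as a real vector:
it is the equality labelling of some vertex labelling. -/
def RealizablePoint (G : SimpleGraph V) (r : G.edgeSet → ℝ) : Prop :=
  ∃ (Λ : Type) (lam : V → Λ), ∀ v w (h : G.Adj v w),
    r (edgeMk G h) = if lam v = lam w then 1 else 0

/-- The classical polytope `C_G`: the convex hull of the realizable edge `{0,1}`-labellings. -/
def classicalPolytope (G : SimpleGraph V) : Set (G.edgeSet → ℝ) :=
  convexHull ℝ {r | RealizablePoint G r}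

/-- The (induced) subgraph of `G` on a set `s` of vertices, kept on the same vertex type:
its edges are exactly the edges of `G` with both endpoints in `s`. -/
def restrictTo (G : SimpleGraph V) (s : Set V) : SimpleGraph V where
  Adj v w := G.Adj v w ∧ v ∈ s ∧ w ∈ s
  symm := ⟨fun v w ⟨h, hv, hw⟩ => ⟨h.symm, hw, hv⟩⟩
  loopless := ⟨fun v h => G.irrefl h.1⟩

theorem restrictTo_le (G : SimpleGraph V) (s : Set V) : restrictTo G s ≤ G := by
  intro v w h; exact h.1

/-- Restriction of an edge weighting along a subgraph inclusion. -/
def restrictWeights {G G' : SimpleGraph V} (h : G' ≤ G) (r : G.edgeSet → ℝ) :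
    G'.edgeSet → ℝ :=
  fun e => r ⟨e.1, SimpleGraph.edgeSet_subset_edgeSet.mpr h e.2⟩

/-!
Restricting weights to a subgraph is linear and preserves realizability, so it maps `C_G`
into `C_{G₁}` and `C_{G₂}`. Conversely, `C_{G₁} × C_{G₂}` is the convex hull of pairs of
realizable points, and the linear map gluing a pair of weightings sends such a pair to a
realizable point of `G`: relabel the labelling of `G₂` so that the class of the cut vertex `v`
receives the label of `v` in `G₁`, and all other classes fresh labels. Gluing the two
restrictions of `r` gives back `r`.
-/

section ConvexHull

variable {E F W : Type*} [AddCommGroup E] [Module ℝ E] [AddCommGroup F] [Module ℝ F]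
  [AddCommGroup W] [Module ℝ W]

lemma LinearMap.apply_mem_convexHull_of_mapsTo (f : E →ₗ[ℝ] W) {s : Set E} {t : Set W}
    (hst : Set.MapsTo f s t) {x : E} (hx : x ∈ convexHull ℝ s) : f x ∈ convexHull ℝ t :=
  convexHull_mono hst.image_subset (f.image_convexHull s ▸ Set.mem_image_of_mem f hx)

lemma LinearMap.apply_mk_mem_convexHull (f : E × F →ₗ[ℝ] W) {s : Set E} {t : Set F}
    {u : Set W} (hf : ∀ x ∈ s, ∀ y ∈ t, f (x, y) ∈ u) {x : E} {y : F}
    (hx : x ∈ convexHull ℝ s) (hy : y ∈ convexHull ℝ t) : f (x, y) ∈ convexHull ℝ u :=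
  f.apply_mem_convexHull_of_mapsTo (fun p hp => hf p.1 hp.1 p.2 hp.2)
    (mk_mem_convexHull_prod hx hy)

end ConvexHull

section Restriction

variable {G G' : SimpleGraph V}

lemma RealizablePoint.restrict (h : G' ≤ G) {r : G.edgeSet → ℝ}
    (hr : RealizablePoint G r) : RealizablePoint G' (restrictWeights h r) :=
  let ⟨Λ, lam, hlam⟩ := hr
  ⟨Λ, lam, fun x y hxy => hlam x y (h hxy)⟩

lemma restrictWeights_mem_classicalPolytope (h : G' ≤ G) {r : G.edgeSet → ℝ}
    (hr : r ∈ classicalPolytope G) : restrictWeights h r ∈ classicalPolytope G' :=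
  LinearMap.apply_mem_convexHull_of_mapsTo
    (LinearMap.funLeft ℝ ℝ (Set.inclusion (edgeSet_subset_edgeSet.mpr h)))
    (fun _ => RealizablePoint.restrict h) hr

end Restriction

section Gluing

/-- On edges of `G` lying in neither `G₁` nor `G₂` the glued weight is the junk value `0`. -/
noncomputable def glueWeights (G G₁ G₂ : SimpleGraph V) :
    ((G₁.edgeSet → ℝ) × (G₂.edgeSet → ℝ)) →ₗ[ℝ] (G.edgeSet → ℝ) where
  toFun p e := if h : e.1 ∈ G₁.edgeSet then p.1 ⟨e.1, h⟩
    else if h' : e.1 ∈ G₂.edgeSet then p.2 ⟨e.1, h'⟩ else 0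
  map_add' p q := by funext e; dsimp; split_ifs <;> simp
  map_smul' c p := by funext e; dsimp; split_ifs <;> simp

lemma glueWeights_restrictWeights {G G₁ G₂ : SimpleGraph V} (hG : G ≤ G₁ ⊔ G₂)
    (h₁ : G₁ ≤ G) (h₂ : G₂ ≤ G) (r : G.edgeSet → ℝ) :
    glueWeights G G₁ G₂ (restrictWeights h₁ r, restrictWeights h₂ r) = r := by
  funext ⟨e, he⟩
  have he' : e ∈ G₁.edgeSet ∪ G₂.edgeSet := edgeSet_sup G₁ G₂ ▸ edgeSet_mono hG he
  simp only [glueWeights, LinearMap.coe_mk, AddHom.coe_mk]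
  split_ifs with e₁ e₂
  · rfl
  · rfl
  · exact (he'.elim e₁ e₂).elim

variable {Λ₁ Λ₂ : Type} (V₁ : Set V) (v : V) (lam₁ : V → Λ₁) (lam₂ : V → Λ₂)

noncomputable def glueLabelling : V → Λ₁ ⊕ Λ₂ := fun z =>
  if z ∈ V₁ then .inl (lam₁ z) else if lam₂ z = lam₂ v then .inl (lam₁ v) else .inr (lam₂ z)

variable {V₁ v lam₁ lam₂}

lemma glueLabelling_eq_iff_of_mem_left {x y : V} (hx : x ∈ V₁) (hy : y ∈ V₁) :
    glueLabelling V₁ v lam₁ lam₂ x = glueLabelling V₁ v lam₁ lam₂ y ↔ lam₁ x = lam₁ y := by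
  simp [glueLabelling, hx, hy]

lemma glueLabelling_of_mem_right {V₂ : Set V} (hmeet : V₁ ∩ V₂ ⊆ {v}) {z : V} (hz : z ∈ V₂) :
    glueLabelling V₁ v lam₁ lam₂ z =
      if lam₂ z = lam₂ v then .inl (lam₁ v) else .inr (lam₂ z) := by
  by_cases hz₁ : z ∈ V₁
  · obtain rfl : z = v := hmeet ⟨hz₁, hz⟩
    simp [glueLabelling, hz₁]
  · simp [glueLabelling, hz₁]

lemma glueLabelling_eq_iff_of_mem_right {V₂ : Set V} (hmeet : V₁ ∩ V₂ ⊆ {v}) {x y : V}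
    (hx : x ∈ V₂) (hy : y ∈ V₂) :
    glueLabelling V₁ v lam₁ lam₂ x = glueLabelling V₁ v lam₁ lam₂ y ↔ lam₂ x = lam₂ y := by
  rw [glueLabelling_of_mem_right hmeet hx, glueLabelling_of_mem_right hmeet hy]
  split_ifs <;> grind

variable {G : SimpleGraph V} {V₂ : Set V}

lemma RealizablePoint.glue (hmeet : V₁ ∩ V₂ ⊆ {v})
    (hG : G ≤ restrictTo G V₁ ⊔ restrictTo G V₂)
    {p₁ : (restrictTo G V₁).edgeSet → ℝ} {p₂ : (restrictTo G V₂).edgeSet → ℝ}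
    (hp₁ : RealizablePoint (restrictTo G V₁) p₁) (hp₂ : RealizablePoint (restrictTo G V₂) p₂) :
    RealizablePoint G (glueWeights G (restrictTo G V₁) (restrictTo G V₂) (p₁, p₂)) := by
  obtain ⟨Λ₁, lam₁, hlam₁⟩ := hp₁
  obtain ⟨Λ₂, lam₂, hlam₂⟩ := hp₂
  refine ⟨Λ₁ ⊕ Λ₂, glueLabelling V₁ v lam₁ lam₂, fun x y hxy => ?_⟩
  by_cases h₁ : (restrictTo G V₁).Adj x y
  · have hglue : glueWeights G _ _ (p₁, p₂) (edgeMk G hxy) = p₁ (edgeMk _ h₁) := dif_pos h₁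
    simp only [hglue, hlam₁ x y h₁, glueLabelling_eq_iff_of_mem_left h₁.2.1 h₁.2.2]
  · have h₂ : (restrictTo G V₂).Adj x y := (hG hxy).resolve_left h₁
    have hglue : glueWeights G _ _ (p₁, p₂) (edgeMk G hxy) = p₂ (edgeMk _ h₂) :=
      (dif_neg h₁).trans (dif_pos h₂)
    simp only [hglue, hlam₂ x y h₂, glueLabelling_eq_iff_of_mem_right hmeet h₂.2.1 h₂.2.2]

lemma glueWeights_mem_classicalPolytope (hmeet : V₁ ∩ V₂ ⊆ {v})
    (hG : G ≤ restrictTo G V₁ ⊔ restrictTo G V₂)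
    {p₁ : (restrictTo G V₁).edgeSet → ℝ} {p₂ : (restrictTo G V₂).edgeSet → ℝ}
    (hp₁ : p₁ ∈ classicalPolytope (restrictTo G V₁))
    (hp₂ : p₂ ∈ classicalPolytope (restrictTo G V₂)) :
    glueWeights G (restrictTo G V₁) (restrictTo G V₂) (p₁, p₂) ∈ classicalPolytope G :=
  LinearMap.apply_mk_mem_convexHull _
    (fun _ hq₁ _ hq₂ => RealizablePoint.glue hmeet hG hq₁ hq₂) hp₁ hp₂

end Gluing

theorem stmt5_general (G : SimpleGraph V) (V₁ V₂ : Set V) (v : V)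
    (hmeet : V₁ ∩ V₂ = {v})
    (hedges : ∀ x y, G.Adj x y → (x ∈ V₁ ∧ y ∈ V₁) ∨ (x ∈ V₂ ∧ y ∈ V₂))
    (r : G.edgeSet → ℝ) :
    r ∈ classicalPolytope G ↔
      (restrictWeights (restrictTo_le G V₁) r ∈ classicalPolytope (restrictTo G V₁) ∧
       restrictWeights (restrictTo_le G V₂) r ∈ classicalPolytope (restrictTo G V₂)) := by
  have hG : G ≤ restrictTo G V₁ ⊔ restrictTo G V₂ := fun x y hxy =>
    (hedges x y hxy).imp (fun h => ⟨hxy, h⟩) (fun h => ⟨hxy, h⟩)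
  refine ⟨fun hr => ⟨restrictWeights_mem_classicalPolytope _ hr,
    restrictWeights_mem_classicalPolytope _ hr⟩, fun ⟨hr₁, hr₂⟩ => ?_⟩
  rw [← glueWeights_restrictWeights hG (restrictTo_le G V₁) (restrictTo_le G V₂) r]
  exact glueWeights_mem_classicalPolytope hmeet.subset hG hr₁ hr₂

/-- If `G` is the gluing of its induced subgraphs `G₁` on `V₁` and `G₂` on `V₂` along a
single vertex `v` (i.e. `V₁ ∩ V₂ = {v}` and every edge lies within `V₁` or within `V₂`),
then an edge weighting `r ∈ [0,1]^{E(G)}` lies in `C_G` iff its restriction to `E(G₁)`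
lies in `C_{G₁}` and its restriction to `E(G₂)` lies in `C_{G₂}`. -/
theorem stmt5 [Fintype V] (G : SimpleGraph V) (V₁ V₂ : Set V) (v : V)
    (hcover : V₁ ∪ V₂ = Set.univ) (hmeet : V₁ ∩ V₂ = {v})
    (hedges : ∀ x y, G.Adj x y → (x ∈ V₁ ∧ y ∈ V₁) ∨ (x ∈ V₂ ∧ y ∈ V₂))
    (r : G.edgeSet → ℝ) (hr01 : ∀ e, r e ∈ Set.Icc (0 : ℝ) 1) :
    r ∈ classicalPolytope G ↔
      (restrictWeights (restrictTo_le G V₁) r ∈ classicalPolytope (restrictTo G V₁) ∧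
       restrictWeights (restrictTo_le G V₂) r ∈ classicalPolytope (restrictTo G V₂)) :=
  stmt5_general G V₁ V₂ v hmeet hedges r
end

section
/- Let G be a finite connected simple graph with at least one vertex. Then the classical polytope C_G equals the full unit hypercube [0,1]^{E(G)} if and only if G is a tree (i.e., G is connected and acyclic). -/
/-!
Every realizable labelling is `{0,1}`-valued, so `C_G` lies in the cube, and the cube is the
convex hull of its `{0,1}`-points. In a forest every `{0,1}`-labelling `α` is realizable: label
each vertex by its component in the subgraph of edges where `α = 1`; an edge with `α = 0` inside
one component would close a cycle. Conversely, if the edge `e` closes a cycle whose other edges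
form `F`, every realizable `r` satisfies the cycle inequality `1 - r e ≤ ∑ f ∈ F, (1 - r f)`
(labels agree along `F` when `r = 1` there). It is affine, so it holds on `C_G`, but it fails at
the cube vertex that is `0` on `e` and `1` elsewhere.
-/

open SimpleGraph
open scoped Classical

variable {V : Type*}

namespace SimpleGraph

variable {G : SimpleGraph V}

lemma edgeMk_symm {v w : V} (h : G.Adj v w) : edgeMk G h.symm = edgeMk G h :=
  Subtype.ext Sym2.eq_swap

lemma exists_eq_edgeMk (e : G.edgeSet) : ∃ v w, ∃ h : G.Adj v w, e = edgeMk G h := by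
  obtain ⟨e, he⟩ := e
  induction e using Sym2.ind with
  | _ v w => exact ⟨v, w, he, rfl⟩

lemma IsAcyclic.adj_of_le_of_reachable {H : SimpleGraph V} (hG : G.IsAcyclic) (hHG : H ≤ G)
    {v w : V} (h : G.Adj v w) (hH : H.Reachable v w) : H.Adj v w := by
  obtain ⟨p⟩ := hH
  have hmem := isBridge_iff_forall_walk_mem_edges.mp
    (isAcyclic_iff_forall_adj_isBridge.mp hG h) (p.mapLe hHG)
  rw [Walk.edges_mapLe_eq_edges] at hmem
  exact p.adj_of_mem_edges hmem

def levelOneGraph (G : SimpleGraph V) (α : G.edgeSet → ℝ) : SimpleGraph V where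
  Adj v w := ∃ h : G.Adj v w, α (edgeMk G h) = 1
  symm := ⟨fun _ _ ⟨h, hα⟩ => ⟨h.symm, by rwa [edgeMk_symm]⟩⟩
  loopless := ⟨fun _ ⟨h, _⟩ => G.loopless.irrefl _ h⟩

lemma levelOneGraph_adj {α : G.edgeSet → ℝ} {v w : V} :
    (G.levelOneGraph α).Adj v w ↔ ∃ h : G.Adj v w, α (edgeMk G h) = 1 :=
  Iff.rfl

lemma levelOneGraph_le (α : G.edgeSet → ℝ) : G.levelOneGraph α ≤ G :=
  fun _ _ h => (levelOneGraph_adj.mp h).1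

end SimpleGraph

section

variable {G : SimpleGraph V}

lemma RealizablePoint.eq_zero_or_eq_one {r : G.edgeSet → ℝ} (hr : RealizablePoint G r)
    (e : G.edgeSet) : r e = 0 ∨ r e = 1 := by
  obtain ⟨Λ, lam, hlam⟩ := hr
  obtain ⟨v, w, h, rfl⟩ := exists_eq_edgeMk e
  rw [hlam v w h]
  split_ifs <;> simp

lemma realizablePoint_of_labelling [Finite V] {Λ : Type*} (lam : V → Λ) {r : G.edgeSet → ℝ}
    (hr : ∀ v w (h : G.Adj v w), r (edgeMk G h) = if lam v = lam w then 1 else 0) :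
    RealizablePoint G r := by
  -- `Λ` may be too large for `Type`; label `v` instead by its class among the `n` vertices.
  obtain ⟨n, ⟨eV⟩⟩ := Finite.exists_equiv_fin V
  refine ⟨Fin n → Prop, fun v i => lam (eV.symm i) = lam v, fun v w h => ?_⟩
  have hclass : (fun i => lam (eV.symm i) = lam v) = (fun i => lam (eV.symm i) = lam w) ↔
      lam v = lam w := by
    refine ⟨fun hvw => ?_, fun hvw => by rw [hvw]⟩
    simpa using congrFun hvw (eV v)
  rw [hr v w h, hclass]

lemma SimpleGraph.IsAcyclic.realizablePoint [Finite V] (hG : G.IsAcyclic) {α : G.edgeSet → ℝ}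
    (hα : ∀ e, α e = 0 ∨ α e = 1) : RealizablePoint G α := by
  refine realizablePoint_of_labelling (G.levelOneGraph α).connectedComponentMk fun v w h => ?_
  rw [ConnectedComponent.eq]
  rcases hα (edgeMk G h) with h0 | h1
  · rw [h0, if_neg]
    intro hreach
    obtain ⟨_, h1⟩ := levelOneGraph_adj.mp <|
      hG.adj_of_le_of_reachable (levelOneGraph_le α) h hreach
    rw [h0] at h1
    exact zero_ne_one h1
  · rw [h1, if_pos (Adj.reachable (levelOneGraph_adj.mpr ⟨h, h1⟩))]

lemma labelling_eq_of_walk {Λ : Type*} {lam : V → Λ} {r : G.edgeSet → ℝ}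
    (hr : ∀ v w (h : G.Adj v w), r (edgeMk G h) = if lam v = lam w then 1 else 0)
    {v w : V} (q : G.Walk v w) (hq : ∀ e : G.edgeSet, (e : Sym2 V) ∈ q.edges → r e = 1) :
    lam v = lam w := by
  induction q with
  | nil => rfl
  | @cons u x w h q ih =>
    have hux : r (edgeMk G h) = 1 := hq _ (by simp [edgeMk])
    rw [hr u x h] at hux
    have hlam : lam u = lam x := by
      by_contra hne
      simp [if_neg hne] at hux
    rw [hlam]
    exact ih fun e he => hq e (by simp [he])

lemma RealizablePoint.one_sub_le_sum {r : G.edgeSet → ℝ} (hr : RealizablePoint G r)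
    (F : Finset G.edgeSet) {v w : V} (h : G.Adj v w) (q : G.Walk w v)
    (hq : ∀ e : G.edgeSet, (e : Sym2 V) ∈ q.edges → e ∈ F) :
    1 - r (edgeMk G h) ≤ ∑ e ∈ F, (1 - r e) := by
  have hbit := hr.eq_zero_or_eq_one
  have hnonneg : ∀ e, 0 ≤ 1 - r e := fun e => by rcases hbit e with h0 | h1 <;> simp [*]
  by_cases hF : ∀ e ∈ F, r e = 1
  · obtain ⟨Λ, lam, hlam⟩ := hr
    have hwv : lam w = lam v := labelling_eq_of_walk hlam q fun e he => hF e (hq e he)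
    rw [hlam v w h, if_pos hwv.symm, sub_self]
    exact Finset.sum_nonneg fun e _ => hnonneg e
  · push Not at hF
    obtain ⟨e, heF, he⟩ := hF
    calc 1 - r (edgeMk G h) ≤ 1 - r e := by
          rw [(hbit e).resolve_right he]
          rcases hbit (edgeMk G h) with h0 | h1 <;> simp [*]
      _ ≤ ∑ e ∈ F, (1 - r e) := Finset.single_le_sum (fun e _ => hnonneg e) heF

lemma convex_setOf_one_sub_le_sum {ι : Type*} (i : ι) (F : Finset ι) :
    Convex ℝ {r : ι → ℝ | 1 - r i ≤ ∑ j ∈ F, (1 - r j)} := by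
  intro x hx y hy a b ha hb hab
  simp only [Set.mem_ofPred_eq, Pi.add_apply, Pi.smul_apply, smul_eq_mul] at hx hy ⊢
  have hsplit : ∀ j, 1 - (a * x j + b * y j) = a * (1 - x j) + b * (1 - y j) := fun j => by
    linear_combination -hab
  simp only [hsplit, Finset.sum_add_distrib, ← Finset.mul_sum]
  nlinarith

lemma one_sub_le_sum_of_mem_classicalPolytope {r : G.edgeSet → ℝ} (hr : r ∈ classicalPolytope G)
    (F : Finset G.edgeSet) {v w : V} (h : G.Adj v w) (q : G.Walk w v)
    (hq : ∀ e : G.edgeSet, (e : Sym2 V) ∈ q.edges → e ∈ F) :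
    1 - r (edgeMk G h) ≤ ∑ e ∈ F, (1 - r e) :=
  convexHull_min (fun _ hs => RealizablePoint.one_sub_le_sum hs F h q hq)
    (convex_setOf_one_sub_le_sum _ F) hr

lemma classicalPolytope_subset_cube (G : SimpleGraph V) :
    classicalPolytope G ⊆ {r : G.edgeSet → ℝ | ∀ e, r e ∈ Set.Icc (0 : ℝ) 1} := by
  have hcube : Convex ℝ {r : G.edgeSet → ℝ | ∀ e, r e ∈ Set.Icc (0 : ℝ) 1} := by
    simpa [Set.pi] using convex_pi (s := Set.univ) fun (_ : G.edgeSet) _ => convex_Icc (0 : ℝ) 1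
  refine convexHull_min (fun r hr e => ?_) hcube
  rcases RealizablePoint.eq_zero_or_eq_one hr e with h0 | h1 <;> simp [*]

lemma convexHull_setOf_eq_zero_or_eq_one {ι : Type*} [Finite ι] :
    convexHull ℝ {r : ι → ℝ | ∀ i, r i = 0 ∨ r i = 1} = {r | ∀ i, r i ∈ Set.Icc (0 : ℝ) 1} := by
  have hpi := convexHull_pi (𝕜 := ℝ) Set.univ fun _ : ι => ({0, 1} : Set ℝ)
  simp only [convexHull_pair, segment_eq_Icc zero_le_one] at hpi
  simpa [Set.pi, Set.mem_insert_iff] using hpi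

lemma SimpleGraph.IsAcyclic.cube_subset_classicalPolytope [Finite V] (hG : G.IsAcyclic) :
    {r : G.edgeSet → ℝ | ∀ e, r e ∈ Set.Icc (0 : ℝ) 1} ⊆ classicalPolytope G := by
  rw [← convexHull_setOf_eq_zero_or_eq_one]
  exact convexHull_mono fun _ => hG.realizablePoint

lemma isAcyclic_of_cube_subset_classicalPolytope [Fintype V]
    (hC : {r : G.edgeSet → ℝ | ∀ e, r e ∈ Set.Icc (0 : ℝ) 1} ⊆ classicalPolytope G) :
    G.IsAcyclic := by
  rintro v (_ | ⟨h, q⟩) hc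
  · exact hc.ne_nil rfl
  obtain ⟨-, hfresh⟩ := (Walk.cons_isCycle_iff q h).mp hc
  set F := Finset.univ.filter fun e : G.edgeSet => (e : Sym2 V) ∈ q.edges
  set r : G.edgeSet → ℝ := fun e => if e = edgeMk G h then 0 else 1
  have hr : r ∈ classicalPolytope G := hC fun e => by by_cases he : e = edgeMk G h <;> simp [r, he]
  have hF : ∀ e ∈ F, r e = 1 := by
    intro e he
    simp only [F, Finset.mem_filter, Finset.mem_univ, true_and] at he
    have hne : e ≠ edgeMk G h := fun hee => hfresh (by rw [hee] at he; exact he)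
    simp only [r, if_neg hne]
  have := one_sub_le_sum_of_mem_classicalPolytope hr F h q (by simp [F])
  rw [Finset.sum_congr rfl fun e he => by rw [hF e he]] at this
  norm_num [r] at this

end

/-- For a finite connected graph `G` (hence with at least one vertex), the classical
polytope `C_G` equals the full unit hypercube `[0,1]^{E(G)}` iff `G` is a tree. -/
theorem stmt7 [Fintype V] (G : SimpleGraph V) (hconn : G.Connected) :
    classicalPolytope G = {r : G.edgeSet → ℝ | ∀ e, r e ∈ Set.Icc (0 : ℝ) 1} ↔
      G.IsTree := by
  refine ⟨fun hC => ⟨hconn, isAcyclic_of_cube_subset_classicalPolytope hC.symm.subset⟩,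
    fun hT => ?_⟩
  exact (classicalPolytope_subset_cube G).antisymm hT.isAcyclic.cube_subset_classicalPolytope
end

section
/- Fix n ≥ 2 and let K_n be the complete simple graph on {1, …, n}, with E_n partitioned as G_n = { {1,i} : i = 2, …, n } and R_n = E_n ∖ G_n; let h_n(r) = Σ_{e ∈ G_n} r_e − Σ_{e ∈ R_n} r_e. For each i = 2, …, n, let r^{(i)} ∈ {0,1}^{E_n} assign 1 to the edge {1,i} and 0 to all other edges; for each pair i < j in {2, …, n}, let r^{(i,j)} ∈ {0,1}^{E_n} assign 1 to exactly the three edges {1,i}, {1,j}, {i,j} and 0 to all others. Let F be the set of all these points. Then: (i) every element of F is a realizable edge {0,1}-labelling of K_n, hence a vertex of C_{K_n}; (ii) every element r of F satisfies h_n(r) = 1; (iii) F has exactly n(n−1)/2 elements; and (iv) the family F is affinely independent in ℝ^{E_n}. Consequently the valid inequality h_n(r) ≤ 1 defines a facet of the classical polytope C_{K_n}. -/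
/-!
If `r` is the equality labelling of `λ` and `A` is the class of the vertex `0`, then `r` agrees
with the indicator of the clique on `A` on the edges at `0` and dominates it on all other edges,
so `h(r) ≤ h(1_A) = k - k(k-1)/2 ≤ 1` with `k = |A| - 1`; by linearity this extends to
`C_{K_n}`.

The points of `F` are exactly the clique indicators of `{0} ∪ t` for the edges `t` of `K_n`
(so `k ∈ {1, 2}` and `h = 1`), and they are even linearly independent: evaluated at an edge `e`
with `0 ∉ e` only the coefficient of `t = e` survives, and once those coefficients vanish the same
holds at the edges through `0`.
-/

open SimpleGraph
open scoped Classical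

variable {V : Type*}

/-- The complete graph `K_n` on vertex set `{1, …, n}`, modelled as `Fin n`
(vertex `1` of the paper corresponds to `0 : Fin n`). -/
abbrev Kgraph (n : ℕ) : SimpleGraph (Fin n) := ⊤

/-- The functional `h_n(r) = Σ_{e ∈ G_n} r_e − Σ_{e ∈ R_n} r_e`, where `G_n` consists of
the edges containing the vertex `0` (the paper's vertex `1`) and `R_n` of all remaining
edges of `K_n`. -/
noncomputable def hFun (n : ℕ) [NeZero n] (r : (Kgraph n).edgeSet → ℝ) : ℝ :=
  ∑ e : (Kgraph n).edgeSet, (if (0 : Fin n) ∈ (e : Sym2 (Fin n)) then r e else - r e)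

/-- `r^{(i)}`: the edge labelling assigning `1` to the edge `{0,i}` and `0` elsewhere. -/
noncomputable def point1 (n : ℕ) [NeZero n] (i : Fin n) : (Kgraph n).edgeSet → ℝ :=
  fun e => if (e : Sym2 (Fin n)) = s((0 : Fin n), i) then 1 else 0

/-- `r^{(i,j)}`: the edge labelling assigning `1` to exactly the three edges
`{0,i}`, `{0,j}`, `{i,j}` and `0` elsewhere. -/
noncomputable def point2 (n : ℕ) [NeZero n] (i j : Fin n) : (Kgraph n).edgeSet → ℝ :=
  fun e => if ((e : Sym2 (Fin n)) = s((0 : Fin n), i) ∨ (e : Sym2 (Fin n)) = s((0 : Fin n), j) ∨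
      (e : Sym2 (Fin n)) = s(i, j)) then 1 else 0

/-- The set `F` of all the points `r^{(i)}` and `r^{(i,j)}`. -/
def Fset (n : ℕ) [NeZero n] : Set ((Kgraph n).edgeSet → ℝ) :=
  {p | ∃ i : Fin n, i ≠ 0 ∧ p = point1 n i} ∪
  {p | ∃ i j : Fin n, i ≠ 0 ∧ j ≠ 0 ∧ i ≠ j ∧ p = point2 n i j}

open scoped Finset

section CliqueIndicator

noncomputable def cliqueIndicator (G : SimpleGraph V) (A : Set V) : G.edgeSet → ℝ :=
  fun e => if ∀ x ∈ (e : Sym2 V), x ∈ A then 1 else 0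

theorem realizablePoint_cliqueIndicator {V : Type} (G : SimpleGraph V) (A : Set V) :
    RealizablePoint G (cliqueIndicator G A) := by
  refine ⟨Option V, fun v => if v ∈ A then none else some v, fun v w h => ?_⟩
  have hvw : v ≠ w := h.ne
  simp only [cliqueIndicator, edgeMk, Sym2.mem_iff, forall_eq_or_imp, forall_eq]
  by_cases hv : v ∈ A <;> by_cases hw : w ∈ A <;> simp [hv, hw, hvw]

end CliqueIndicator

section CompleteGraphEdges

variable [Fintype V] [DecidableEq V]

theorem card_filter_top_edgeFinset_subset (B : Finset V) :
    #{e ∈ (⊤ : SimpleGraph V).edgeFinset | ∀ x ∈ e, x ∈ B} = (#B).choose 2 := by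
  rw [← Sym2.card_image_offDiag B]
  congr 1
  ext e
  induction e using Sym2.ind with
  | _ a b =>
    simp only [Finset.mem_filter, mem_edgeFinset, mem_edgeSet, top_adj, Sym2.mem_iff,
      forall_eq_or_imp, forall_eq, Finset.mem_image, Finset.mem_offDiag, Prod.exists,
      Function.uncurry_apply_pair, Sym2.eq_iff]
    grind

theorem card_filter_top_edgeFinset_mem_subset {a : V} {A : Finset V} (ha : a ∈ A) :
    #{e ∈ (⊤ : SimpleGraph V).edgeFinset | a ∈ e ∧ ∀ x ∈ e, x ∈ A} = #(A.erase a) := by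
  rw [← Finset.card_image_of_injective (A.erase a) (f := (s(a, ·)))
    fun _ _ => Sym2.congr_right.mp]
  congr 1
  ext e
  induction e using Sym2.ind with
  | _ b c =>
    simp only [Finset.mem_filter, mem_edgeFinset, mem_edgeSet, top_adj, Sym2.mem_iff,
      forall_eq_or_imp, forall_eq, Finset.mem_image, Finset.mem_erase, Sym2.eq_iff]
    grind

end CompleteGraphEdges

section StarFunctional

variable {n : ℕ} [NeZero n]

theorem hFun_cliqueIndicator {A : Finset (Fin n)} (hA : 0 ∈ A) :
    hFun n (cliqueIndicator (Kgraph n) A) = #(A.erase 0) - ((#(A.erase 0)).choose 2 : ℕ) := by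
  simp only [hFun, cliqueIndicator, Finset.mem_coe]
  rw [← Finset.sum_subtype (Kgraph n).edgeFinset (fun _ => mem_edgeFinset)
    fun e => if (0 : Fin n) ∈ e then (if ∀ x ∈ e, x ∈ A then (1 : ℝ) else 0)
      else -(if ∀ x ∈ e, x ∈ A then (1 : ℝ) else 0)]
  rw [Finset.sum_ite, Finset.sum_neg_distrib, Finset.sum_boole, Finset.sum_boole,
    Finset.filter_filter, Finset.filter_filter]
  have h1 : #{e ∈ (Kgraph n).edgeFinset | 0 ∈ e ∧ ∀ x ∈ e, x ∈ A} = #(A.erase 0) := by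
    convert card_filter_top_edgeFinset_mem_subset hA
  have h2 :
      #{e ∈ (Kgraph n).edgeFinset | 0 ∉ e ∧ ∀ x ∈ e, x ∈ A} = (#(A.erase 0)).choose 2 := by
    convert card_filter_top_edgeFinset_subset (A.erase 0) using 2
    ext e
    simp only [Finset.mem_filter, Finset.mem_erase]
    grind
  rw [h1, h2, sub_eq_add_neg]

theorem hFun_isLinearMap : IsLinearMap ℝ (hFun n) where
  map_add r s := by
    simp only [hFun, Pi.add_apply, ← Finset.sum_add_distrib]
    exact Finset.sum_congr rfl fun e _ => by split <;> ring
  map_smul c r := by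
    simp only [hFun, Pi.smul_apply, smul_eq_mul, Finset.mul_sum]
    exact Finset.sum_congr rfl fun e _ => by split <;> ring

theorem hFun_le_hFun_cliqueIndicator {Λ : Type} (lam : Fin n → Λ)
    {r : (Kgraph n).edgeSet → ℝ}
    (hr : ∀ v w (h : (Kgraph n).Adj v w), r (edgeMk _ h) = if lam v = lam w then 1 else 0) :
    hFun n r ≤ hFun n (cliqueIndicator (Kgraph n) {v | lam v = lam 0}) := by
  refine Finset.sum_le_sum fun ⟨e, he⟩ _ => ?_
  induction e using Sym2.ind with
  | _ v w =>
    rw [show r ⟨s(v, w), he⟩ = _ from hr v w he]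
    simp only [cliqueIndicator, Sym2.mem_iff, forall_eq_or_imp, forall_eq, Set.mem_ofPred_eq]
    split_ifs <;> grind

theorem sub_choose_two_le_one (k : ℕ) : (k : ℝ) - (k.choose 2 : ℕ) ≤ 1 := by
  rw [Nat.cast_choose_two]
  rcases Nat.lt_or_ge k 2 with hk | hk
  · interval_cases k <;> norm_num
  · have : (2 : ℝ) ≤ k := by exact_mod_cast hk
    nlinarith

theorem hFun_le_one_of_realizablePoint {r : (Kgraph n).edgeSet → ℝ}
    (hr : RealizablePoint (Kgraph n) r) : hFun n r ≤ 1 := by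
  obtain ⟨Λ, lam, hr⟩ := hr
  let A : Finset (Fin n) := {v | lam v = lam 0}
  calc hFun n r ≤ hFun n (cliqueIndicator (Kgraph n) A) := by
        simpa [A] using hFun_le_hFun_cliqueIndicator lam hr
    _ = #(A.erase 0) - ((#(A.erase 0)).choose 2 : ℕ) :=
        hFun_cliqueIndicator (by simp [A])
    _ ≤ 1 := sub_choose_two_le_one _

theorem hFun_le_one_of_mem_classicalPolytope {r : (Kgraph n).edgeSet → ℝ}
    (hr : r ∈ classicalPolytope (Kgraph n)) : hFun n r ≤ 1 :=
  convexHull_min (fun _ => hFun_le_one_of_realizablePoint)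
    (convex_halfSpace_le hFun_isLinearMap 1) hr

end StarFunctional

section FacetPoints

variable {n : ℕ} [NeZero n]

noncomputable def facetPoint (t : Sym2 (Fin n)) : (Kgraph n).edgeSet → ℝ :=
  cliqueIndicator (Kgraph n) {x | x = 0 ∨ x ∈ t}

theorem facetPoint_mk (a b : Fin n) :
    facetPoint s(a, b) = cliqueIndicator (Kgraph n) ↑({0, a, b} : Finset (Fin n)) := by
  rw [facetPoint]
  congr 1
  ext x
  simp [Sym2.mem_iff]

theorem point1_eq_facetPoint (i : Fin n) : point1 n i = facetPoint s(0, i) := by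
  funext ⟨e, he⟩
  induction e using Sym2.ind with
  | _ a b =>
    have hab : a ≠ b := he
    simp only [point1, facetPoint, cliqueIndicator, Sym2.eq_iff, Sym2.mem_iff, forall_eq_or_imp,
      forall_eq, Set.mem_ofPred_eq]
    congr 1
    grind

theorem point2_eq_facetPoint (i j : Fin n) : point2 n i j = facetPoint s(i, j) := by
  funext ⟨e, he⟩
  induction e using Sym2.ind with
  | _ a b =>
    have hab : a ≠ b := he
    simp only [point2, facetPoint, cliqueIndicator, Sym2.eq_iff, Sym2.mem_iff, forall_eq_or_imp,
      forall_eq, Set.mem_ofPred_eq]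
    congr 1
    grind

theorem hFun_facetPoint {t : Sym2 (Fin n)} (ht : t ∈ (Kgraph n).edgeSet) :
    hFun n (facetPoint t) = 1 := by
  induction t using Sym2.ind with
  | _ a b =>
    have hab : a ≠ b := ht
    rw [facetPoint_mk, hFun_cliqueIndicator (by simp), Finset.erase_insert_eq_erase]
    have hcard : #(({a, b} : Finset (Fin n)).erase 0) = 1 ∨
        #(({a, b} : Finset (Fin n)).erase 0) = 2 := by
      by_cases ha : a = 0
      · subst ha
        simp [Finset.erase_insert_eq_erase,
          Finset.erase_eq_of_notMem (Finset.notMem_singleton.mpr hab)]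
      by_cases hb : b = 0
      · subst hb
        simp [Finset.erase_insert_of_ne ha]
      · rw [Finset.erase_eq_of_notMem (by simp [Ne.symm ha, Ne.symm hb]), Finset.card_pair hab]
        simp
    rcases hcard with h | h <;> norm_num [h]

theorem Fset_eq_range :
    Fset n = Set.range fun t : (Kgraph n).edgeSet => facetPoint (t : Sym2 (Fin n)) := by
  ext p
  constructor
  · rintro (⟨i, hi, rfl⟩ | ⟨i, j, -, -, hij, rfl⟩)
    · exact ⟨⟨s(0, i), Ne.symm hi⟩, (point1_eq_facetPoint i).symm⟩
    · exact ⟨⟨s(i, j), hij⟩, (point2_eq_facetPoint i j).symm⟩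
  · rintro ⟨⟨t, ht⟩, rfl⟩
    induction t using Sym2.ind with
    | _ a b =>
      have hab : a ≠ b := ht
      by_cases ha : a = 0
      · subst ha
        exact Or.inl ⟨b, hab.symm, (point1_eq_facetPoint b).symm⟩
      by_cases hb : b = 0
      · subst hb
        exact Or.inl ⟨a, ha, (congrArg _ Sym2.eq_swap).trans (point1_eq_facetPoint a).symm⟩
      · exact Or.inr ⟨a, b, ha, hb, hab, (point2_eq_facetPoint a b).symm⟩

theorem facetPoint_apply_self (t : (Kgraph n).edgeSet) : facetPoint (t : Sym2 (Fin n)) t = 1 :=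
  if_pos fun _ hx => Or.inr hx

theorem facetPoint_apply_eq_zero {t e : (Kgraph n).edgeSet} (hte : t ≠ e)
    (h : (0 : Fin n) ∉ (e : Sym2 (Fin n)) ∨ (0 : Fin n) ∈ (t : Sym2 (Fin n))) :
    facetPoint (t : Sym2 (Fin n)) e = 0 := by
  obtain ⟨t, ht⟩ := t
  obtain ⟨e, he⟩ := e
  induction t using Sym2.ind with
  | _ a b =>
  induction e using Sym2.ind with
  | _ c d =>
    have hab : a ≠ b := ht
    have hcd : c ≠ d := he
    simp only [ne_eq, Subtype.mk.injEq, Sym2.eq_iff, Sym2.mem_iff] at hte h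
    simp only [facetPoint, cliqueIndicator, Sym2.mem_iff, forall_eq_or_imp, forall_eq,
      Set.mem_ofPred_eq, ite_eq_right_iff, one_ne_zero, imp_false]
    grind

theorem linearIndependent_facetPoint :
    LinearIndependent ℝ fun t : (Kgraph n).edgeSet => facetPoint (t : Sym2 (Fin n)) := by
  rw [Fintype.linearIndependent_iff]
  intro g hg
  have eval (e : (Kgraph n).edgeSet)
      (hvanish : ∀ t ≠ e, g t * facetPoint (t : Sym2 (Fin n)) e = 0) : g e = 0 := by
    have := congrFun hg e
    simp only [Finset.sum_apply, Pi.smul_apply, smul_eq_mul, Pi.zero_apply] at this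
    rwa [Finset.sum_eq_single e (fun t _ hte => hvanish t hte) (by simp), facetPoint_apply_self,
      mul_one] at this
  have avoiding (e : (Kgraph n).edgeSet) (he : (0 : Fin n) ∉ (e : Sym2 (Fin n))) : g e = 0 :=
    eval e fun t hte => by rw [facetPoint_apply_eq_zero hte (Or.inl he), mul_zero]
  intro e
  by_cases he : (0 : Fin n) ∈ (e : Sym2 (Fin n))
  · refine eval e fun t hte => ?_
    by_cases ht : (0 : Fin n) ∈ (t : Sym2 (Fin n))
    · rw [facetPoint_apply_eq_zero hte (Or.inr ht), mul_zero]
    · rw [avoiding t ht, zero_mul]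
  · exact avoiding e he

end FacetPoints

theorem stmt10_general (n : ℕ) [NeZero n] :
    (∀ r ∈ classicalPolytope (Kgraph n), hFun n r ≤ 1) ∧
    (∀ p ∈ Fset n, RealizablePoint (Kgraph n) p) ∧
    (∀ p ∈ Fset n, hFun n p = 1) ∧
    (Fset n).ncard = n * (n - 1) / 2 ∧
    AffineIndependent ℝ (fun p : Fset n => (p : (Kgraph n).edgeSet → ℝ)) := by
  have hli := linearIndependent_facetPoint (n := n)
  rw [Fset_eq_range]
  refine ⟨fun r => hFun_le_one_of_mem_classicalPolytope, ?_, ?_, ?_, ?_⟩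
  · rintro _ ⟨t, rfl⟩
    exact realizablePoint_cliqueIndicator _ _
  · rintro _ ⟨t, rfl⟩
    exact hFun_facetPoint t.2
  · rw [Set.ncard_range_of_injective hli.injective, Nat.card_eq_fintype_card, ← edgeFinset_card,
      card_edgeFinset_top_eq_card_choose_two, Fintype.card_fin, Nat.choose_two_right]
  · exact ((linearIndepOn_id_range_iff hli.injective).mpr hli).affineIndependent

/-- For `n ≥ 2`: (i) every element of `F` is a realizable edge `{0,1}`-labelling of `K_n`
(hence a vertex of `C_{K_n}`); (ii) every element of `F` saturates the inequality,
`h_n(r) = 1`; (iii) `F` has exactly `n(n−1)/2` elements; (iv) `F` is affinely independent.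
Together with the validity of `h_n(r) ≤ 1` on `C_{K_n}` (also stated), this says the
inequality `h_n(r) ≤ 1` defines a facet of the classical polytope `C_{K_n}`. -/
theorem stmt10 (n : ℕ) [NeZero n] (hn : 2 ≤ n) :
    (∀ r ∈ classicalPolytope (Kgraph n), hFun n r ≤ 1) ∧
    (∀ p ∈ Fset n, RealizablePoint (Kgraph n) p) ∧
    (∀ p ∈ Fset n, hFun n p = 1) ∧
    (Fset n).ncard = n * (n - 1) / 2 ∧
    AffineIndependent ℝ (fun p : Fset n => (p : (Kgraph n).edgeSet → ℝ)) :=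
  stmt10_general n
end

section
/- Let H be a finite simple graph and H_⋆ the graph obtained from H by adjoining a new vertex ψ together with edges {ψ, v} for every v ∈ V(H), so V(H_⋆) = V(H) ⊔ {ψ} and E(H_⋆) = E(H) ∪ { {ψ,v} : v ∈ V(H) }. For a subset S ⊆ V(H), let α_S : E(H_⋆) → {0,1} be the edge labelling with α_S(e) = 0 for all e ∈ E(H) and α_S({ψ,v}) = 1 if v ∈ S and 0 otherwise. Then α_S is a realizable edge labelling of H_⋆ if and only if S is a stable set (independent set) of H, i.e., no two vertices of S are adjacent in H. -/
/-!
If `ψ` and two adjacent vertices `v, w ∈ S` all carry the label of `ψ`, then transitivity of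
equality forces label `1` on the edge `{v, w}` of `H`. Conversely, when `S` is stable, give `ψ`
and the vertices of `S` one common label and every other vertex a label of its own.
-/

open SimpleGraph

variable {V : Type*}

/-- The graph `H_⋆` obtained from `H` by adjoining a new vertex `ψ` (modelled by `none`
in `Option V`) together with edges `{ψ, v}` for every `v ∈ V(H)`. -/
def starGraph (H : SimpleGraph V) : SimpleGraph (Option V) where
  Adj x y := x ≠ y ∧ ∀ v w : V, x = some v → y = some w → H.Adj v w
  symm := ⟨fun x y ⟨hne, h⟩ => ⟨hne.symm, fun v w hy hx => (h w v hx hy).symm⟩⟩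
  loopless := ⟨fun x h => h.1 rfl⟩

theorem Realizable.of_triangle {G : SimpleGraph V} {α : G.edgeSet → Prop}
    (hα : Realizable G α) {u v w : V} (huv : G.Adj u v) (huw : G.Adj u w) (hvw : G.Adj v w)
    (h₁ : α (edgeMk G huv)) (h₂ : α (edgeMk G huw)) : α (edgeMk G hvw) := by
  obtain ⟨Λ, lam, hlam⟩ := hα
  exact (hlam v w hvw).mpr (((hlam u v huv).mp h₁).symm.trans ((hlam u w huw).mp h₂))

section StarGraph

variable {H : SimpleGraph V} (S : Set V)

theorem starGraph_adj_none_some (v : V) : (_root_.starGraph H).Adj none (some v) :=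
  ⟨nofun, nofun⟩

theorem starGraph_adj_some_some {v w : V} :
    (_root_.starGraph H).Adj (some v) (some w) ↔ H.Adj v w :=
  ⟨fun h => h.2 v w rfl rfl, fun h => ⟨by simpa using h.ne, by rintro _ _ ⟨⟩ ⟨⟩; exact h⟩⟩

/-- The edge labelling `α_S`. -/
def starLabelling : (_root_.starGraph H).edgeSet → Prop :=
  fun e => ∃ v ∈ S, (e : Sym2 (Option V)) = s((none : Option V), some v)

theorem starLabelling_none_some_iff {v : V} (h : (_root_.starGraph H).Adj none (some v)) :
    starLabelling S (edgeMk _ h) ↔ v ∈ S := by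
  simp [starLabelling, edgeMk]

theorem starLabelling_some_none_iff {v : V} (h : (_root_.starGraph H).Adj (some v) none) :
    starLabelling S (edgeMk _ h) ↔ v ∈ S := by
  simp [starLabelling, edgeMk]

theorem not_starLabelling_some_some {v w : V}
    (h : (_root_.starGraph H).Adj (some v) (some w)) : ¬ starLabelling S (edgeMk _ h) := by
  simp [starLabelling, edgeMk]

variable [DecidablePred (· ∈ S)] {Λ : Type*} (f : V → Λ)

def stableSetLabelling : Option V → Option Λ
  | none => none
  | some v => if v ∈ S then none else some (f v)

theorem stableSetLabelling_none_eq_some_iff {v : V} :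
    stableSetLabelling S f none = stableSetLabelling S f (some v) ↔ v ∈ S := by
  by_cases hv : v ∈ S <;> simp [stableSetLabelling, hv]

theorem stableSetLabelling_some_eq_some_iff (hf : f.Injective) {v w : V} (hvw : v ≠ w) :
    stableSetLabelling S f (some v) = stableSetLabelling S f (some w) ↔ v ∈ S ∧ w ∈ S := by
  by_cases hv : v ∈ S <;> by_cases hw : w ∈ S <;> simp [stableSetLabelling, hv, hw, hf.ne hvw]

theorem isEqualityLabelling_stableSetLabelling (hS : ∀ v ∈ S, ∀ w ∈ S, ¬ H.Adj v w)
    (hf : f.Injective) :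
    IsEqualityLabelling (_root_.starGraph H) (stableSetLabelling S f) (starLabelling S) := by
  rintro (_ | v) (_ | w) h
  · exact absurd rfl h.1
  · rw [starLabelling_none_some_iff, stableSetLabelling_none_eq_some_iff]
  · rw [starLabelling_some_none_iff, eq_comm, stableSetLabelling_none_eq_some_iff]
  · have hvw := starGraph_adj_some_some.mp h
    rw [stableSetLabelling_some_eq_some_iff S f hf hvw.ne]
    exact iff_of_false (not_starLabelling_some_some S h) fun ⟨hv, hw⟩ => hS v hv w hw hvw

end StarGraph

/-- `α_S` is realizable for `H_⋆` iff `S` is a stable (independent) set of `H`. Here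
`α_S` assigns `0` to every edge of `H` and, on the new edge `{ψ, v}`, the value `1`
iff `v ∈ S`. -/
theorem stmt11 [Fintype V] (H : SimpleGraph V) (S : Set V) :
    Realizable (_root_.starGraph H)
      (fun e => ∃ v ∈ S, (e : Sym2 (Option V)) = s((none : Option V), some v)) ↔
    ∀ v ∈ S, ∀ w ∈ S, ¬ H.Adj v w := by
  classical
  constructor
  · intro hα v hv w hw hvw
    have hvw' := starGraph_adj_some_some.mpr hvw
    exact not_starLabelling_some_some S hvw' <| hα.of_triangle (starGraph_adj_none_some v)
      (starGraph_adj_none_some w) hvw' ⟨v, hv, rfl⟩ ⟨w, hw, rfl⟩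
  · intro hS
    -- `Realizable` asks for labels in `Type`, while `V` may live in a higher universe.
    have hf : Function.Injective fun v => (Fintype.equivFin V v : ℕ) :=
      Fin.val_injective.comp (Fintype.equivFin V).injective
    exact ⟨Option ℕ, _, isEqualityLabelling_stableSetLabelling S _ hS hf⟩
end

section
/- Let n ≥ 3, let (Λ, F) be a measurable space, and let μ_1, …, μ_n be probability measures on (Λ, F). Define the total variation distance d_TV(μ, ν) = sup_{E ∈ F} |μ(E) − ν(E)|, and define the edge weighting r on the n-cycle graph C_n (vertices 1, …, n, edges {i, i+1} for i = 1, …, n−1 and {1, n}) by r_{i,i+1} = 1 − d_TV(μ_i, μ_{i+1}) and r_{1,n} = 1 − d_TV(μ_1, μ_n). Then r satisfies every cycle inequality of C_n, i.e., for every edge e of C_n: −r_e + Σ_{e' ≠ e} r_{e'} ≤ n − 2. -/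
/-!
The weights satisfy `r_e = 1 − d_e` with `d_e = d_TV(μ_e, μ_{e+1})`, so the cycle inequality at
`e` is equivalent to `d_e ≤ Σ_{e' ≠ e} d_{e'}`. This holds because `d_TV` is a pseudometric:
the edges other than `e` form a path from `μ_{e+1}` back to `μ_e`, and the triangle inequality
along that path bounds `d_TV(μ_e, μ_{e+1})` by the sum of its steps.
-/

open MeasureTheory

/-- The total variation distance `d_TV(μ, ν) = sup_{E measurable} |μ(E) − ν(E)|`. -/
noncomputable def tvDist {Λ : Type*} [MeasurableSpace Λ] (μ ν : Measure Λ) : ℝ :=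
  ⨆ E : {E : Set Λ // MeasurableSet E}, |(μ E.1).toReal - (ν E.1).toReal|

open Finset

section TotalVariation

variable {Λ : Type*} [MeasurableSpace Λ]

lemma bddAbove_range_abs_toReal_sub (μ ν : Measure Λ) [IsFiniteMeasure μ] [IsFiniteMeasure ν] :
    BddAbove (Set.range fun E : {E : Set Λ // MeasurableSet E} =>
      |(μ E.1).toReal - (ν E.1).toReal|) := by
  refine ⟨μ.real Set.univ + ν.real Set.univ, ?_⟩
  rintro _ ⟨E, rfl⟩
  have hμ : μ.real E.1 ≤ μ.real Set.univ := measureReal_mono (Set.subset_univ _)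
  have hν : ν.real E.1 ≤ ν.real Set.univ := measureReal_mono (Set.subset_univ _)
  have hμ₀ : 0 ≤ μ.real E.1 := measureReal_nonneg
  have hν₀ : 0 ≤ ν.real E.1 := measureReal_nonneg
  change |μ.real E.1 - ν.real E.1| ≤ _
  exact abs_sub_le_iff.2 ⟨by linarith, by linarith⟩

lemma tvDist_self (μ : Measure Λ) : tvDist μ μ = 0 := by
  simp [tvDist]

lemma tvDist_comm (μ ν : Measure Λ) : tvDist μ ν = tvDist ν μ := by
  simp_rw [tvDist, abs_sub_comm]

lemma tvDist_triangle (μ ν ρ : Measure Λ) [IsFiniteMeasure μ] [IsFiniteMeasure ν]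
    [IsFiniteMeasure ρ] : tvDist μ ρ ≤ tvDist μ ν + tvDist ν ρ :=
  ciSup_le fun E => calc
    |(μ E.1).toReal - (ρ E.1).toReal|
        ≤ |(μ E.1).toReal - (ν E.1).toReal| + |(ν E.1).toReal - (ρ E.1).toReal| :=
      abs_sub_le _ _ _
    _ ≤ tvDist μ ν + tvDist ν ρ :=
      add_le_add (le_ciSup (bddAbove_range_abs_toReal_sub μ ν) E)
        (le_ciSup (bddAbove_range_abs_toReal_sub ν ρ) E)

lemma tvDist_le_range_sum_tvDist (μ : ℕ → Measure Λ) [∀ i, IsFiniteMeasure (μ i)] (k : ℕ) :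
    tvDist (μ 0) (μ k) ≤ ∑ j ∈ range k, tvDist (μ j) (μ (j + 1)) := by
  induction k with
  | zero => simp [tvDist_self]
  | succ k ih =>
    rw [sum_range_succ]
    linarith [tvDist_triangle (μ 0) (μ k) (μ (k + 1))]

end TotalVariation

section CyclicIndex

open Fin.NatCast

lemma Fin.add_one_add_natCast_pred {n : ℕ} [NeZero n] (e : Fin n) :
    e + 1 + ((n - 1 : ℕ) : Fin n) = e := by
  rw [add_assoc, add_comm 1, ← Nat.cast_add_one, Nat.sub_add_cancel NeZero.one_le,
    Fin.natCast_self, add_zero]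

lemma Fin.sum_erase_eq_sum_range_add_one {M : Type*} [AddCancelCommMonoid M] {n : ℕ} [NeZero n]
    (g : Fin n → M) (e : Fin n) :
    ∑ i ∈ univ.erase e, g i = ∑ j ∈ range (n - 1), g (e + 1 + (j : Fin n)) := by
  have hrotate : ∑ i, g i = ∑ j ∈ range n, g (e + 1 + (j : Fin n)) := by
    rw [← Fin.sum_univ_eq_sum_range (fun j => g (e + 1 + (j : Fin n)))]
    simp only [Fin.cast_val_eq_self]
    exact (Equiv.sum_comp (Equiv.addLeft (e + 1)) g).symm
  have hsplit := sum_range_succ (fun j => g (e + 1 + (j : Fin n))) (n - 1)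
  rw [Fin.add_one_add_natCast_pred, Nat.sub_add_cancel NeZero.one_le] at hsplit
  rw [← sum_erase_add _ _ (mem_univ e), hsplit] at hrotate
  exact add_right_cancel hrotate

lemma tvDist_le_sum_erase {Λ : Type*} [MeasurableSpace Λ] {n : ℕ} [NeZero n]
    (μ : Fin n → Measure Λ) [∀ i, IsFiniteMeasure (μ i)] (e : Fin n) :
    tvDist (μ e) (μ (e + 1)) ≤ ∑ i ∈ univ.erase e, tvDist (μ i) (μ (i + 1)) := by
  have hpath := tvDist_le_range_sum_tvDist (fun j => μ (e + 1 + (j : Fin n))) (n - 1)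
  simp only [Nat.cast_zero, add_zero, Fin.add_one_add_natCast_pred, Nat.cast_add_one,
    ← add_assoc] at hpath
  rw [tvDist_comm, Fin.sum_erase_eq_sum_range_add_one]
  exact hpath

end CyclicIndex

theorem stmt13_general (n : ℕ) [NeZero n] {Λ : Type*} [MeasurableSpace Λ]
    (μ : Fin n → Measure Λ) [∀ i, IsProbabilityMeasure (μ i)]
    (r : Fin n → ℝ) (hr : ∀ i, r i = 1 - tvDist (μ i) (μ (i + 1))) :
    ∀ e : Fin n, - r e + ∑ e' ∈ Finset.univ.erase e, r e' ≤ (n : ℝ) - 2 := by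
  intro e
  have hcard : ((univ.erase e).card : ℝ) = n - 1 := by
    rw [card_erase_of_mem (mem_univ e), card_univ, Fintype.card_fin, Nat.cast_pred (NeZero.pos n)]
  simp only [hr, sum_sub_distrib, sum_const, nsmul_eq_mul, mul_one, hcard]
  linarith [tvDist_le_sum_erase μ e]

/-- Let `μ_1, …, μ_n` (`n ≥ 3`) be probability measures, and weight the edges of the
`n`-cycle (edge `i` joining vertices `i` and `i+1` cyclically, vertices modelled by
`Fin n`) by `r_i = 1 − d_TV(μ_i, μ_{i+1})`. Then `r` satisfies every cycle inequality:
for every edge `e`, `−r_e + Σ_{e' ≠ e} r_{e'} ≤ n − 2`. -/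
theorem stmt13 (n : ℕ) [NeZero n] (hn : 3 ≤ n) {Λ : Type*} [MeasurableSpace Λ]
    (μ : Fin n → Measure Λ) [∀ i, IsProbabilityMeasure (μ i)]
    (r : Fin n → ℝ) (hr : ∀ i, r i = 1 - tvDist (μ i) (μ (i + 1))) :
    ∀ e : Fin n, - r e + ∑ e' ∈ Finset.univ.erase e, r e' ≤ (n : ℝ) - 2 :=
  stmt13_general n μ r hr
end

section
/- Let n ≥ 3 and let C_n be the n-cycle graph. An edge weighting r ∈ [0,1]^{E(C_n)} lies in the classical polytope C_{C_n} if and only if for every edge e of C_n it satisfies the cycle inequality −r_e + Σ_{e' ≠ e} r_{e'} ≤ n − 2. That is, the classical polytope of the n-cycle is exactly the subset of the unit hypercube cut out by the n cycle inequalities. -/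
open SimpleGraph
open scoped Classical

variable {V : Type*}

/-- The `n`-cycle graph on vertex set `Fin n` (cyclically, edge `{i, i+1}` for each `i`;
for `n ≥ 3` this is the usual cycle with edges `{i,i+1}`, `i = 1, …, n−1`, and `{1,n}`). -/
def cycleG (n : ℕ) [NeZero n] : SimpleGraph (Fin n) where
  Adj i j := i ≠ j ∧ (j = i + 1 ∨ i = j + 1)
  symm := ⟨fun i j ⟨hne, h⟩ => ⟨hne.symm, h.symm⟩⟩
  loopless := ⟨fun i h => h.1 rfl⟩

/-!
Write `1 - r` for the deficit vector of an edge weighting `r`; the cycle inequalities say that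
no coordinate of the deficit exceeds half of the total deficit.

The realizable labellings of a cycle are the `0/1` vectors whose number of zeros is not one.
A single disagreeing edge is impossible: the indicator of one label would change exactly once
around the cycle. Conversely, with `m` zeros, labelling each vertex in `ZMod m` by the number of
zero edges passed so far realizes the labelling. These are exactly the `0/1` points of the
polytope, so by Krein–Milman it suffices to show that its extreme points are `0/1` vectors. At a
point with a fractional coordinate `i` one can move in both directions: along the ray from `1`
if the total deficit is below `2`, along `e i` if it is above `2`, and along `e i - e j` for a
second fractional coordinate `j` if it equals `2` (such a `j` exists, since otherwise the total
deficit would not be an integer).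
-/

open Finset Filter Topology

theorem Equiv.Perm.card_filter_ne_ne_one {α Λ : Type*} [Fintype α] [DecidableEq Λ]
    (σ : Equiv.Perm α) (f : α → Λ) : #{i | f i ≠ f (σ i)} ≠ 1 := by
  intro h
  obtain ⟨i₀, hi₀⟩ := card_eq_one.mp h
  have hmem : ∀ i, f i ≠ f (σ i) ↔ i = i₀ := fun i => by
    simpa using congrArg (i ∈ ·) hi₀
  let μ : α → ℤ := fun i => if f i = f i₀ then 1 else 0
  have hsum : ∑ i, (μ (σ i) - μ i) = -1 := by
    rw [sum_eq_single i₀]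
    · simp [μ, Ne.symm ((hmem i₀).mpr rfl)]
    · intro i _ hi
      simp [μ, not_not.mp (mt (hmem i).mp hi)]
    · simp
  rw [sum_sub_distrib, Equiv.sum_comp σ μ, sub_self] at hsum
  exact absurd hsum (by decide)

open Fin.NatCast in
theorem Fin.exists_add_one_eq_add_of_sum_eq_zero {G : Type*} [AddCommGroup G] {n : ℕ} [NeZero n]
    (d : Fin n → G) (hd : ∑ i, d i = 0) : ∃ p : Fin n → G, ∀ i, p (i + 1) = p i + d i := by
  refine ⟨fun i => ∑ k ∈ range i, d k, fun i => ?_⟩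
  dsimp only
  by_cases h : (i : ℕ) + 1 < n
  · rw [Fin.val_add_one_of_lt' h, sum_range_succ, Fin.cast_val_eq_self]
  · have hi : (i : ℕ) + 1 = n := by omega
    have hwrap : i + 1 = 0 := by
      rw [← Fin.cast_val_eq_self i, ← Nat.cast_one, ← Nat.cast_add, hi, Fin.natCast_self]
    have htot : ∑ k ∈ range ((i : ℕ) + 1), d k = 0 := by
      rw [hi, ← Fin.sum_univ_eq_sum_range (fun k => d k)]; simpa using hd
    rw [sum_range_succ, Fin.cast_val_eq_self] at htot
    rw [hwrap, htot, Fin.val_zero, range_zero, sum_empty]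

theorem notMem_extremePoints_of_eventually_add_smul_mem {E : Type*} [AddCommGroup E]
    [Module ℝ E] {A : Set E} {x v : E} (hv : v ≠ 0)
    (h : ∀ᶠ t in 𝓝 (0 : ℝ), x + t • v ∈ A) : x ∉ A.extremePoints ℝ := by
  intro hx
  obtain ⟨ε, hε, hball⟩ := Metric.eventually_nhds_iff.mp h
  have hdist : ∀ s : ℝ, |s| = ε / 2 → dist s 0 < ε := fun s hs => by
    rw [Real.dist_0_eq_abs, hs]; linarith
  have hseg : x ∈ openSegment ℝ (x + (ε / 2) • v) (x + (-(ε / 2)) • v) :=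
    ⟨1 / 2, 1 / 2, by norm_num, by norm_num, by norm_num, by module⟩
  have := hx.2 (hball (hdist _ (abs_of_pos (half_pos hε))))
    (hball (hdist _ (by rw [abs_neg, abs_of_pos (half_pos hε)]))) hseg
  simp [hε.ne', hv] at this

theorem eventually_nonneg_add_mul {a b : ℝ} (ha : 0 ≤ a) (hb : a = 0 → b = 0) :
    ∀ᶠ t in 𝓝 (0 : ℝ), 0 ≤ a + t * b := by
  rcases ha.eq_or_lt with rfl | ha
  · simp [hb rfl]
  · have : Tendsto (fun t : ℝ => a + t * b) (𝓝 0) (𝓝 a) :=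
      Continuous.tendsto' (by fun_prop) 0 a (by simp)
    exact (this.eventually_const_lt ha).mono fun _ h => h.le

theorem sum_one_sub_eq_card_filter {ι : Type*} {s : Finset ι} {r : ι → ℝ}
    (hr : ∀ i ∈ s, r i = 0 ∨ r i = 1) : ∑ i ∈ s, (1 - r i) = #{i ∈ s | r i = 0} := by
  rw [natCast_card_filter]
  refine sum_congr rfl fun i hi => ?_
  rcases hr i hi with h | h <;> simp [h]

section CyclePolytope

variable {ι : Type*} [Fintype ι]

def cycleLabellings (ι : Type*) [Fintype ι] : Set (ι → ℝ) :=
  {r | (∀ i, r i = 0 ∨ r i = 1) ∧ #{i | r i = 0} ≠ 1}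

def cyclePolytope (ι : Type*) [Fintype ι] : Set (ι → ℝ) :=
  {r | (∀ i, r i ∈ Set.Icc 0 1) ∧ ∀ i, 2 * (1 - r i) ≤ ∑ j, (1 - r j)}

theorem neg_add_sum_erase_le_iff [DecidableEq ι] (r : ι → ℝ) (i : ι) :
    -r i + ∑ j ∈ univ.erase i, r j ≤ Fintype.card ι - 2 ↔ 2 * (1 - r i) ≤ ∑ j, (1 - r j) := by
  have hsum : ∑ j, (1 - r j) = Fintype.card ι - (r i + ∑ j ∈ univ.erase i, r j) := by
    rw [add_sum_erase _ _ (mem_univ i), sum_sub_distrib]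
    simp
  rw [hsum]
  constructor <;> intro h <;> linarith

theorem mem_cyclePolytope_iff_card_ne_one {r : ι → ℝ} (hr : ∀ i, r i = 0 ∨ r i = 1) :
    r ∈ cyclePolytope ι ↔ #{i | r i = 0} ≠ 1 := by
  rw [cyclePolytope, Set.mem_ofPred_eq, sum_one_sub_eq_card_filter fun i _ => hr i]
  constructor
  · rintro ⟨-, h⟩ hone
    obtain ⟨i, hi⟩ := card_pos.mp (hone ▸ one_pos)
    have := h i
    rw [(mem_filter.mp hi).2, hone] at this
    norm_num at this
  · intro hne
    refine ⟨fun i => ?_, fun i => ?_⟩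
    · rcases hr i with h | h <;> simp [h]
    · rcases hr i with h | h
      · have : 0 < #{i | r i = 0} := card_pos.mpr ⟨i, mem_filter.mpr ⟨mem_univ i, h⟩⟩
        have : (2 : ℝ) ≤ #{i | r i = 0} := by exact_mod_cast (by omega : 2 ≤ #{i | r i = 0})
        simpa [h] using this
      · simp [h]

theorem cycleLabellings_subset_cyclePolytope : cycleLabellings ι ⊆ cyclePolytope ι :=
  fun _ ⟨hr, hne⟩ => (mem_cyclePolytope_iff_card_ne_one hr).mpr hne

theorem finite_cycleLabellings : (cycleLabellings ι).Finite :=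
  (Set.Finite.pi fun _ => Set.toFinite {0, 1}).subset fun _ hr i _ => hr.1 i

theorem convex_cyclePolytope : Convex ℝ (cyclePolytope ι) := by
  intro x hx y hy a b ha hb hab
  have hdeficit : ∀ j, 1 - (a • x + b • y) j = a * (1 - x j) + b * (1 - y j) := fun j => by
    simp only [Pi.add_apply, Pi.smul_apply, smul_eq_mul]
    linear_combination -hab
  refine ⟨fun i => by simpa using convex_Icc (0 : ℝ) 1 (hx.1 i) (hy.1 i) ha hb hab, fun i => ?_⟩
  rw [hdeficit, sum_congr rfl fun j _ => hdeficit j, sum_add_distrib, ← mul_sum, ← mul_sum]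
  nlinarith [mul_le_mul_of_nonneg_left (hx.2 i) ha, mul_le_mul_of_nonneg_left (hy.2 i) hb]

theorem isCompact_cyclePolytope : IsCompact (cyclePolytope ι) := by
  have hclosed : IsClosed (cyclePolytope ι) := by
    simp only [cyclePolytope, Set.ofPred_and, Set.ofPred_forall]
    exact (isClosed_iInter fun i => isClosed_Icc.preimage (continuous_apply i)).inter
      (isClosed_iInter fun i => isClosed_le (by fun_prop) (by fun_prop))
  exact (isCompact_univ_pi fun _ => isCompact_Icc).of_isClosed_subset hclosed
    fun _ hr i _ => hr.1 i

theorem eventually_add_smul_mem_cyclePolytope {r v : ι → ℝ} (hr : r ∈ cyclePolytope ι)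
    (hbox : ∀ i, r i = 0 ∨ r i = 1 → v i = 0)
    (htight : ∀ i, 2 * (1 - r i) = ∑ j, (1 - r j) → 2 * v i = ∑ j, v j) :
    ∀ᶠ t in 𝓝 (0 : ℝ), r + t • v ∈ cyclePolytope ι := by
  have hlower := eventually_all.mpr fun i =>
    eventually_nonneg_add_mul (hr.1 i).1 fun h => hbox i (Or.inl h)
  have hupper := eventually_all.mpr fun i =>
    eventually_nonneg_add_mul (b := -v i) (sub_nonneg.mpr (hr.1 i).2)
      fun h => by rw [hbox i (Or.inr (by linarith)), neg_zero]
  have hform := eventually_all.mpr fun i =>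
    eventually_nonneg_add_mul (b := 2 * v i - ∑ j, v j) (sub_nonneg.mpr (hr.2 i))
      fun h => by rw [htight i (by linarith), sub_self]
  filter_upwards [hlower, hupper, hform] with t hl hu hf
  have hsum : ∑ j, (1 - (r + t • v) j) = ∑ j, (1 - r j) - t * ∑ j, v j := by
    simp only [Pi.add_apply, Pi.smul_apply, smul_eq_mul, mul_sum, ← sum_sub_distrib]
    exact sum_congr rfl fun j _ => by ring
  refine ⟨fun i => ⟨?_, ?_⟩, fun i => ?_⟩
  · simpa using hl i
  · simp only [Pi.add_apply, Pi.smul_apply, smul_eq_mul]; linarith [hu i]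
  · rw [hsum]
    simp only [Pi.add_apply, Pi.smul_apply, smul_eq_mul]
    linarith [hf i]

theorem eq_zero_or_eq_one_of_mem_extremePoints_cyclePolytope {r : ι → ℝ}
    (hr : r ∈ (cyclePolytope ι).extremePoints ℝ) (i : ι) : r i = 0 ∨ r i = 1 := by
  have hP := hr.1
  by_contra hfrac
  have hi₀ : 0 < r i := (hP.1 i).1.lt_of_ne' fun h => hfrac (Or.inl h)
  have hi₁ : r i < 1 := (hP.1 i).2.lt_of_ne fun h => hfrac (Or.inr h)
  have hbin_ne : ∀ j, r j = 0 ∨ r j = 1 → j ≠ i := fun j hj h => hfrac (h ▸ hj)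
  obtain ⟨v, hv, hev⟩ : ∃ v : ι → ℝ, v ≠ 0 ∧ ∀ᶠ t in 𝓝 (0 : ℝ), r + t • v ∈ cyclePolytope ι := by
    rcases lt_trichotomy (∑ j, (1 - r j)) 2 with hs | hs | hs
    · refine ⟨fun j => 1 - r j, fun h => hi₁.ne' (sub_eq_zero.mp (congrFun h i)),
        eventually_add_smul_mem_cyclePolytope hP ?_ fun j h => h⟩
      rintro j (hj | hj)
      · linarith [hP.2 j, hj]
      · simp [hj]
    · obtain ⟨j, hji, hj⟩ : ∃ j ≠ i, ¬(r j = 0 ∨ r j = 1) := by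
        by_contra! hbin
        have hsplit := add_sum_erase univ (fun j => 1 - r j) (mem_univ i)
        rw [sum_one_sub_eq_card_filter fun j hj => hbin j (ne_of_mem_erase hj), hs] at hsplit
        have h1 : (1 : ℝ) < #{j ∈ univ.erase i | r j = 0} := by linarith
        have h2 : (#{j ∈ univ.erase i | r j = 0} : ℝ) < 2 := by linarith
        norm_cast at h1 h2
        omega
      refine ⟨Pi.single i 1 - Pi.single j 1, fun h => by simpa [hji.symm] using congrFun h i,
        eventually_add_smul_mem_cyclePolytope hP (fun k hk => ?_) fun k hk => ?_⟩
      · have hkj : k ≠ j := fun h => hj (h ▸ hk)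
        simp [hbin_ne k hk, hkj]
      · have hk0 : r k = 0 := by linarith
        have hkj : k ≠ j := fun h => hj (h ▸ Or.inl hk0)
        simp [hbin_ne k (Or.inl hk0), hkj, sum_sub_distrib]
    · refine ⟨Pi.single i 1, fun h => by simpa using congrFun h i,
        eventually_add_smul_mem_cyclePolytope hP (fun k hk => by simp [hbin_ne k hk])
          fun k hk => ?_⟩
      linarith [(hP.1 k).1]
  exact notMem_extremePoints_of_eventually_add_smul_mem hv hev hr

theorem extremePoints_cyclePolytope_subset :
    (cyclePolytope ι).extremePoints ℝ ⊆ cycleLabellings ι := fun _ hr =>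
  have hbin := eq_zero_or_eq_one_of_mem_extremePoints_cyclePolytope hr
  ⟨hbin, (mem_cyclePolytope_iff_card_ne_one hbin).mp hr.1⟩

theorem convexHull_cycleLabellings : convexHull ℝ (cycleLabellings ι) = cyclePolytope ι := by
  refine (convexHull_min cycleLabellings_subset_cyclePolytope convex_cyclePolytope).antisymm ?_
  calc cyclePolytope ι
      = closure (convexHull ℝ ((cyclePolytope ι).extremePoints ℝ)) :=
        (closure_convexHull_extremePoints isCompact_cyclePolytope convex_cyclePolytope).symm
    _ ⊆ closure (convexHull ℝ (cycleLabellings ι)) :=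
        closure_mono (convexHull_mono extremePoints_cyclePolytope_subset)
    _ = convexHull ℝ (cycleLabellings ι) :=
        (finite_cycleLabellings.isCompact_convexHull ℝ).isClosed.closure_eq

end CyclePolytope

section CycleGraph

variable {n : ℕ} [NeZero n]

open Fin.NatCast

theorem cycleG_adj_add_one (hn : 2 ≤ n) (i : Fin n) : (cycleG n).Adj i (i + 1) := by
  refine ⟨fun h => ?_, Or.inl rfl⟩
  have : ((1 : ℕ) : Fin n) = 0 := by simpa using h
  have := Nat.le_of_dvd one_pos (Fin.natCast_eq_zero.mp this)
  omega

def cycleEdge (hn : 3 ≤ n) (i : Fin n) : (cycleG n).edgeSet :=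
  edgeMk (cycleG n) (cycleG_adj_add_one (by omega) i)

theorem cycleEdge_injective (hn : 3 ≤ n) : Function.Injective (cycleEdge hn) := by
  intro i j h
  rcases Sym2.eq_iff.mp (congrArg Subtype.val h) with ⟨rfl, -⟩ | ⟨rfl, hj⟩
  · rfl
  · have : ((2 : ℕ) : Fin n) = 0 := by
      have := hj.symm
      rw [add_assoc, left_eq_add] at this
      simpa [one_add_one_eq_two] using this
    have := Nat.le_of_dvd two_pos (Fin.natCast_eq_zero.mp this)
    omega

theorem cycleEdge_surjective (hn : 3 ≤ n) : Function.Surjective (cycleEdge hn) := by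
  rintro ⟨e, he⟩
  induction e using Sym2.ind with
  | _ v w =>
    rcases ((cycleG n).mem_edgeSet.mp he).2 with rfl | rfl
    · exact ⟨v, rfl⟩
    · exact ⟨w, Subtype.ext Sym2.eq_swap⟩

noncomputable def cycleEdgeEquiv (hn : 3 ≤ n) : Fin n ≃ (cycleG n).edgeSet :=
  Equiv.ofBijective _ ⟨cycleEdge_injective hn, cycleEdge_surjective hn⟩

theorem card_edgeSet_cycleG (hn : 3 ≤ n) : Fintype.card (cycleG n).edgeSet = n := by
  simpa using (Fintype.card_congr (cycleEdgeEquiv hn)).symm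

theorem card_filter_cycleEdge (hn : 3 ≤ n) (p : (cycleG n).edgeSet → Prop) [DecidablePred p] :
    #{i | p (cycleEdge hn i)} = #{e | p e} :=
  card_equiv (cycleEdgeEquiv hn) fun _ => by simp only [mem_filter, mem_univ, true_and]; rfl

theorem realizablePoint_cycleG_iff_exists (hn : 3 ≤ n) (r : (cycleG n).edgeSet → ℝ) :
    RealizablePoint (cycleG n) r ↔ ∃ (Λ : Type) (lam : Fin n → Λ),
      ∀ i, r (cycleEdge hn i) = if lam i = lam (i + 1) then 1 else 0 := by
  refine ⟨fun ⟨Λ, lam, h⟩ => ⟨Λ, lam, fun i => h i (i + 1) _⟩, fun ⟨Λ, lam, h⟩ => ⟨Λ, lam, ?_⟩⟩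
  intro v w hvw
  rcases hvw.2 with rfl | rfl
  · exact h v
  · rw [show edgeMk (cycleG n) hvw = cycleEdge hn w from Subtype.ext Sym2.eq_swap, h w]
    simp only [eq_comm]

theorem realizablePoint_cycleG_iff (hn : 3 ≤ n) (r : (cycleG n).edgeSet → ℝ) :
    RealizablePoint (cycleG n) r ↔ r ∈ cycleLabellings (cycleG n).edgeSet := by
  rw [realizablePoint_cycleG_iff_exists hn]
  constructor
  · rintro ⟨Λ, lam, h⟩
    refine ⟨fun e => ?_, ?_⟩
    · obtain ⟨i, rfl⟩ := cycleEdge_surjective hn e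
      rw [h i]; split_ifs <;> simp
    · rw [← card_filter_cycleEdge hn]
      simp only [h, ite_eq_right_iff, one_ne_zero, imp_false]
      exact (Equiv.addRight 1).card_filter_ne_ne_one lam
  · rintro ⟨hbin, hzeros⟩
    set m := #{e | r e = 0}
    have : Nontrivial (ZMod m) := ZMod.nontrivial_iff.mpr hzeros
    let d : Fin n → ZMod m := fun i => if r (cycleEdge hn i) = 0 then 1 else 0
    obtain ⟨p, hp⟩ := Fin.exists_add_one_eq_add_of_sum_eq_zero d (by
      simp only [d, sum_boole]
      convert ZMod.natCast_self m using 2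
      exact card_filter_cycleEdge hn (r · = 0))
    refine ⟨ZMod m, p, fun i => ?_⟩
    rw [hp, left_eq_add]
    rcases hbin (cycleEdge hn i) with h | h <;> simp [d, h]

end CycleGraph

/-- The classical polytope of the `n`-cycle (`n ≥ 3`) is exactly the subset of the unit
hypercube cut out by the `n` cycle inequalities `−r_e + Σ_{e' ≠ e} r_{e'} ≤ n − 2`. -/
theorem stmt15 (n : ℕ) [NeZero n] (hn : 3 ≤ n) (r : (cycleG n).edgeSet → ℝ) :
    r ∈ classicalPolytope (cycleG n) ↔
      ((∀ e, r e ∈ Set.Icc (0 : ℝ) 1) ∧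
       ∀ e : (cycleG n).edgeSet,
         - r e + ∑ e' ∈ Finset.univ.erase e, r e' ≤ (n : ℝ) - 2) := by
  have hvertices : {r | RealizablePoint (cycleG n) r} = cycleLabellings (cycleG n).edgeSet :=
    Set.ext (realizablePoint_cycleG_iff hn)
  rw [classicalPolytope, hvertices, convexHull_cycleLabellings]
  refine and_congr_right' (forall_congr' fun e => ?_)
  have hform := neg_add_sum_erase_le_iff r e
  rw [card_edgeSet_cycleG hn] at hform
  exact hform.symm
end

section
/- Let W₆ be the 6-vertex wheel graph: vertices 1, …, 5 forming a 5-cycle (edges {1,2}, {2,3}, {3,4}, {4,5}, {1,5}) plus a central vertex 6 adjacent to each of 1, …, 5. Then every edge weighting r in the classical polytope C_{W₆} satisfies −r_{12} − r_{23} − r_{34} − r_{45} − r_{15} + r_{16} + r_{26} + r_{36} + r_{46} + r_{56} ≤ 2. In particular, any edge weighting of W₆ with r_{12} = r_{23} = r_{34} = r_{45} = r_{15} = 0 (the KCBS exclusivity constraints) that lies in C_{W₆} satisfies r_{16} + r_{26} + r_{36} + r_{46} + r_{56} ≤ 2. -/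
open SimpleGraph
open scoped Classical

variable {V : Type*}

/-- The 6-vertex wheel graph `W₆`: an outer 5-cycle on vertices `0, …, 4` (the paper's
`1, …, 5`), plus a central vertex `5` (the paper's `6`) adjacent to each outer vertex. -/
def W6 : SimpleGraph (Fin 6) :=
  SimpleGraph.fromEdgeSet
    {s((0 : Fin 6), 1), s((1 : Fin 6), 2), s((2 : Fin 6), 3), s((3 : Fin 6), 4),
     s((0 : Fin 6), 4),
     s((0 : Fin 6), 5), s((1 : Fin 6), 5), s((2 : Fin 6), 5), s((3 : Fin 6), 5),
     s((4 : Fin 6), 5)}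

/-- The weight an edge weighting `r` of `W₆` assigns to the edge `{i,j}`
(and `0` if `{i,j}` is not an edge of `W₆`). -/
noncomputable def wv (r : W6.edgeSet → ℝ) (i j : Fin 6) : ℝ :=
  if h : W6.Adj i j then r (edgeMk W6 h) else 0

/-!
For a vertex labelling `λ`, put `xᵢ = [λᵢ = λ₆]` for the outer vertices. Equality of labels is
transitive, so the label of a cycle edge `{i,j}` is at least `xᵢxⱼ`, and the value of the form
is at most `∑ xᵢ - ∑ xᵢxᵢ₊₁`: the number of maximal runs of ones in a cyclic binary word of
length five (or `0` for the all-ones word), which is at most `2`. The form is linear, so the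
bound passes from the realizable points to their convex hull.
-/

theorem le_of_mem_classicalPolytope {G : SimpleGraph V} (f : (G.edgeSet → ℝ) →ₗ[ℝ] ℝ) {c : ℝ}
    (hf : ∀ r, RealizablePoint G r → f r ≤ c) {r : G.edgeSet → ℝ}
    (hr : r ∈ classicalPolytope G) : f r ≤ c :=
  convexHull_min hf (convex_halfSpace_le f.isLinear c) hr

lemma ite_eq_mul_ite_eq_le {Λ : Type*} {u v w : Λ} :
    ((if u = w then 1 else 0) * (if v = w then 1 else 0) : ℝ) ≤ if u = v then 1 else 0 := by
  split_ifs <;> simp_all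

lemma pentagon_bound {a b c d e : ℝ} (ha : a = 0 ∨ a = 1) (hb : b = 0 ∨ b = 1)
    (hc : c = 0 ∨ c = 1) (hd : d = 0 ∨ d = 1) (he : e = 0 ∨ e = 1) :
    a + b + c + d + e - a * b - b * c - c * d - d * e - a * e ≤ 2 := by
  rcases ha with rfl | rfl <;> rcases hb with rfl | rfl <;> rcases hc with rfl | rfl <;>
    rcases hd with rfl | rfl <;> rcases he with rfl | rfl <;> norm_num

lemma wv_add (r s : W6.edgeSet → ℝ) (i j : Fin 6) : wv (r + s) i j = wv r i j + wv s i j := by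
  unfold wv; split_ifs <;> simp

lemma wv_smul (c : ℝ) (r : W6.edgeSet → ℝ) (i j : Fin 6) : wv (c • r) i j = c * wv r i j := by
  unfold wv; split_ifs <;> simp

noncomputable def wheelForm : (W6.edgeSet → ℝ) →ₗ[ℝ] ℝ where
  toFun r := - wv r 0 1 - wv r 1 2 - wv r 2 3 - wv r 3 4 - wv r 0 4
      + wv r 0 5 + wv r 1 5 + wv r 2 5 + wv r 3 5 + wv r 4 5
  map_add' r s := by simp only [wv_add]; ring
  map_smul' c r := by simp only [wv_smul, RingHom.id_apply, smul_eq_mul]; ring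

lemma wv_eq_ite {r : W6.edgeSet → ℝ} {Λ : Type} {lam : Fin 6 → Λ}
    (hlam : ∀ v w (h : W6.Adj v w), r (edgeMk W6 h) = if lam v = lam w then 1 else 0)
    {i j : Fin 6} (hij : s(i, j) ∈ W6.edgeSet) : wv r i j = if lam i = lam j then 1 else 0 :=
  (dif_pos hij).trans (hlam i j hij)

lemma wheelForm_le_two_of_realizable {r : W6.edgeSet → ℝ} (hr : RealizablePoint W6 r) :
    wheelForm r ≤ 2 := by
  obtain ⟨Λ, lam, hlam⟩ := hr
  have hw := fun i j (hij : s(i, j) ∈ W6.edgeSet) => wv_eq_ite hlam hij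
  simp only [wheelForm, LinearMap.coe_mk, AddHom.coe_mk]
  rw [hw 0 1 (by simp [W6]), hw 1 2 (by simp [W6]), hw 2 3 (by simp [W6]),
    hw 3 4 (by simp [W6]), hw 0 4 (by simp [W6]), hw 0 5 (by simp [W6]), hw 1 5 (by simp [W6]),
    hw 2 5 (by simp [W6]), hw 3 5 (by simp [W6]), hw 4 5 (by simp [W6])]
  have hx : ∀ i, (if lam i = lam 5 then (1 : ℝ) else 0) = 0 ∨
      (if lam i = lam 5 then (1 : ℝ) else 0) = 1 :=
    fun i => by split_ifs <;> simp
  have hpent := pentagon_bound (hx 0) (hx 1) (hx 2) (hx 3) (hx 4)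
  have h01 := @ite_eq_mul_ite_eq_le _ (lam 0) (lam 1) (lam 5)
  have h12 := @ite_eq_mul_ite_eq_le _ (lam 1) (lam 2) (lam 5)
  have h23 := @ite_eq_mul_ite_eq_le _ (lam 2) (lam 3) (lam 5)
  have h34 := @ite_eq_mul_ite_eq_le _ (lam 3) (lam 4) (lam 5)
  have h04 := @ite_eq_mul_ite_eq_le _ (lam 0) (lam 4) (lam 5)
  linarith

/-- Every edge weighting `r` in the classical polytope `C_{W₆}` satisfies
`−r_{12} − r_{23} − r_{34} − r_{45} − r_{15} + r_{16} + r_{26} + r_{36} + r_{46} + r_{56} ≤ 2`;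
in particular, if moreover `r_{12} = r_{23} = r_{34} = r_{45} = r_{15} = 0` (the KCBS
exclusivity constraints), then `r_{16} + r_{26} + r_{36} + r_{46} + r_{56} ≤ 2`. -/
theorem stmt19 (r : W6.edgeSet → ℝ) (hr : r ∈ classicalPolytope W6) :
    (- wv r 0 1 - wv r 1 2 - wv r 2 3 - wv r 3 4 - wv r 0 4
      + wv r 0 5 + wv r 1 5 + wv r 2 5 + wv r 3 5 + wv r 4 5 ≤ 2) ∧
    ((wv r 0 1 = 0 ∧ wv r 1 2 = 0 ∧ wv r 2 3 = 0 ∧ wv r 3 4 = 0 ∧ wv r 0 4 = 0) →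
      wv r 0 5 + wv r 1 5 + wv r 2 5 + wv r 3 5 + wv r 4 5 ≤ 2) := by
  have h : wheelForm r ≤ 2 :=
    le_of_mem_classicalPolytope wheelForm (fun _ => wheelForm_le_two_of_realizable) hr
  simp only [wheelForm, LinearMap.coe_mk, AddHom.coe_mk] at h
  refine ⟨h, fun ⟨h01, h12, h23, h34, h04⟩ => ?_⟩
  linarith
end
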